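/- arXiv:2407.02412 — 2 statements merged into one kernel-verified Lean document; each statement's English description precedes it below -/
import Mathlib

section
/- Fix an odd integer k = 2q+1 ≥ 5 and let I_k be the odd interior gadget. Then there exists a k-leaf root T of I_k such that m_T(t) = k and m_T(b) = 3. -/
open SimpleGraph

/-- A vertex of a graph is a leaf if it has exactly one neighbor. -/
def IsLeafVert {W : Type} (T : SimpleGraph W) (w : W) : Prop := ∃! u, T.Adj w u

/-- `T` (a finite tree on vertex type `W`) together with the injection `f` of the
vertices of `G` onto the leaves of `T` is a `k`-leaf root of `G`:  the leaves of `T`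
are exactly the image of `f`, and two distinct vertices of `G` are adjacent iff
their distance in `T` is at most `k`. -/
def IsLeafRoot {V W : Type} (G : SimpleGraph V) (k : ℕ)
    (T : SimpleGraph W) (f : V → W) : Prop :=
  Finite W ∧ T.IsTree ∧ Function.Injective f ∧
    (∀ w : W, (∃ v, f v = w) ↔ IsLeafVert T w) ∧
    (∀ u v : V, u ≠ v → (G.Adj u v ↔ T.dist (f u) (f v) ≤ k))

/-- `G` is a `k`-leaf power: it admits a `k`-leaf root. -/
def IsKLeafPower {V : Type} (G : SimpleGraph V) (k : ℕ) : Prop :=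
  ∃ (W : Type) (T : SimpleGraph W) (f : V → W), IsLeafRoot G k T f

/-- `m_T(v)`: the minimum over all `u ≠ v` of the distance in the leaf root `T`
between the leaves corresponding to `u` and `v`. -/
noncomputable def mval {V W : Type} (T : SimpleGraph W) (f : V → W) (v : V) : ℕ :=
  sInf {d | ∃ u, u ≠ v ∧ T.dist (f u) (f v) = d}

/-- A vertex has degree at least three. -/
def HasDegreeGEThree {W : Type} (T : SimpleGraph W) (w : W) : Prop :=
  ∃ a b c : W, a ≠ b ∧ a ≠ c ∧ b ≠ c ∧ T.Adj w a ∧ T.Adj w b ∧ T.Adj w c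

/-- A spine of a tree: a path containing every vertex of degree at least 3.  A tree
having a spine is exactly a caterpillar subdivision. -/
def IsSpine {W : Type} (T : SimpleGraph W) {a b : W} (p : T.Walk a b) : Prop :=
  p.IsPath ∧ ∀ w : W, HasDegreeGEThree T w → w ∈ p.support

/-- A linear `k`-leaf root: a `k`-leaf root whose tree is a caterpillar subdivision. -/
def IsLinearLeafRoot {V W : Type} (G : SimpleGraph V) (k : ℕ)
    (T : SimpleGraph W) (f : V → W) : Prop :=
  IsLeafRoot G k T f ∧ ∃ (a b : W) (p : T.Walk a b), IsSpine T p

/-- `G` is a linear `k`-leaf power: it admits a linear `k`-leaf root. -/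
def IsLinearKLeafPower {V : Type} (G : SimpleGraph V) (k : ℕ) : Prop :=
  ∃ (W : Type) (T : SimpleGraph W) (f : V → W), IsLinearLeafRoot G k T f

/-- A cycle of length `n` in `G`, given as an injective map from `ZMod n` with
consecutive images adjacent. -/
def IsCycleIn {V : Type} (G : SimpleGraph V) (n : ℕ) (f : ZMod n → V) : Prop :=
  Function.Injective f ∧ ∀ i : ZMod n, G.Adj (f i) (f (i + 1))

/-- `G` is chordal: every cycle of length at least 4 has a chord. -/
def Chordal {V : Type} (G : SimpleGraph V) : Prop :=
  ∀ n : ℕ, 4 ≤ n → ∀ f : ZMod n → V, IsCycleIn G n f →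
    ∃ i j : ZMod n, j ≠ i ∧ j ≠ i + 1 ∧ j ≠ i - 1 ∧ G.Adj (f i) (f j)

/-- `G` is strongly chordal: chordal, and every even cycle of length at least 6 has
an odd chord (a chord joining two vertices an odd distance apart along the cycle). -/
def StronglyChordal {V : Type} (G : SimpleGraph V) : Prop :=
  Chordal G ∧ ∀ n : ℕ, 6 ≤ n → Even n → ∀ f : ZMod n → V, IsCycleIn G n f →
    ∃ i j : ZMod n, Odd ((j - i).val) ∧ j ≠ i + 1 ∧ j ≠ i - 1 ∧ G.Adj (f i) (f j)

/-- Vertices of the odd interior gadget for `k = 2q+1`: `t`, `b`,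
`x i` for `i : Fin q` (representing `x_{i+1}`), and `y i` for `i : Fin (q-1)`
(representing `y_{i+2}`). -/
inductive IVert (q : ℕ) : Type where
  | t : IVert q
  | b : IVert q
  | x : Fin q → IVert q
  | y : Fin (q - 1) → IVert q

/-- The odd interior gadget `I_k` for odd `k = 2q+1 ≥ 5`: edges `t x_i` and `b x_i`
for all `1 ≤ i ≤ q`, `x_i x_j` for `i < j` (so `X` is a clique), `y_i x_j` for
`2 ≤ i ≤ j ≤ q`, and `b y_q`. -/
def oddGadget (q : ℕ) : SimpleGraph (IVert q) :=
  SimpleGraph.fromRel (fun u v => match u, v with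
    | .t, .x _ => True
    | .b, .x _ => True
    | .x i, .x j => i ≠ j
    | .y a, .x c => (a : ℕ) + 1 ≤ (c : ℕ)
    | .b, .y a => (a : ℕ) = q - 2
    | _, _ => False)

/-!
The root is a caterpillar. Its spine is a path `p₀ … p_{2q}`; `t` and `b` hang from `p₀` and
`p_{2q}` by single edges, `xᵢ` is joined to `p_{q+i-1}` by a path of length `q - i + 1`, `yᵢ`
(`i < q`) to `p_{q+i-1}` by a path of length `q + i`, and `y_q` to `p_{2q}` by a path of length
`2q - 2`. The distance between two leaves is the sum of their leg lengths and the spine distance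
of their feet, and comparing these numbers with `k = 2q + 1` gives exactly the edges of `I_k`.
The leaves nearest to `t` are the `xᵢ`, at distance exactly `k`, and the leaf nearest to `b`
is `x_q`, at distance `3`.
-/

namespace SimpleGraph

variable {V : Type} {G : SimpleGraph V}

lemma not_isLeafVert_of_adj {w a b : V} (ha : G.Adj w a) (hb : G.Adj w b) (hab : a ≠ b) :
    ¬ IsLeafVert G w := by
  rintro ⟨u, -, huniq⟩
  exact hab ((huniq a ha).trans (huniq b hb).symm)

lemma le_add_dist_of_lipschitz (φ : V → ℕ) (hφ : ∀ u v, G.Adj u v → φ v ≤ φ u + 1)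
    {a b : V} (hab : G.Reachable a b) : φ b ≤ φ a + G.dist a b := by
  obtain ⟨p, hp⟩ := hab.exists_walk_length_eq_dist
  rw [← hp]
  clear hp hab
  induction p with
  | nil => simp
  | cons h p ih => grind [Walk.length_cons]

def parentGraph (root : V) (parent : V → V) : SimpleGraph V :=
  fromRel fun u v => v ≠ root ∧ u = parent v

section parentGraph

variable {root : V} {parent : V → V} {depth : V → ℕ}

lemma parentGraph_adj {u v : V} : (parentGraph root parent).Adj u v ↔
    u ≠ v ∧ (v ≠ root ∧ u = parent v ∨ u ≠ root ∧ v = parent u) :=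
  fromRel_adj ..

lemma parentGraph_adj_parent (hdepth : ∀ v, v ≠ root → depth (parent v) < depth v) {v : V}
    (hv : v ≠ root) : (parentGraph root parent).Adj v (parent v) :=
  parentGraph_adj.2 ⟨fun h => (hdepth v hv).ne (congrArg depth h).symm, .inr ⟨hv, rfl⟩⟩

/-- On a cycle, a vertex of maximal depth has both cycle neighbours equal to its parent. -/
theorem isAcyclic_parentGraph (hdepth : ∀ v, v ≠ root → depth (parent v) < depth v) :
    (parentGraph root parent).IsAcyclic := by
  classical
  intro v c hc
  obtain ⟨m, hm, hmax⟩ := c.support.toFinset.exists_max_image depth ⟨v, by simp⟩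
  rw [List.mem_toFinset] at hm
  have hc' := hc.rotate hm
  have to_parent : ∀ w ∈ (c.rotate m hm).support,
      (parentGraph root parent).Adj m w → w = parent m := by
    rintro w hw hmw
    rcases (parentGraph_adj.1 hmw).2 with ⟨hw0, rfl⟩ | ⟨-, rfl⟩
    · rw [Walk.mem_support_rotate_iff] at hw
      exact absurd (hmax w (List.mem_toFinset.2 hw)) (not_le.2 (hdepth w hw0))
    · rfl
  exact hc'.snd_ne_penultimate <|
    (to_parent _ (Walk.getVert_mem_support _ 1) (Walk.adj_snd hc'.not_nil)).trans
      (to_parent _ (Walk.getVert_mem_support _ _) (Walk.adj_penultimate hc'.not_nil).symm).symm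

theorem connected_parentGraph (hdepth : ∀ v, v ≠ root → depth (parent v) < depth v) :
    (parentGraph root parent).Connected := by
  have reach_root : ∀ v, (parentGraph root parent).Reachable v root := by
    intro v
    induction h : depth v using Nat.strong_induction_on generalizing v with
    | _ n ih =>
      by_cases hv : v = root
      · rw [hv]
      · exact (parentGraph_adj_parent hdepth hv).reachable.trans
          (ih _ (h ▸ hdepth v hv) _ rfl)
  have : Nonempty V := ⟨root⟩
  exact .mk fun u v => (reach_root u).trans (reach_root v).symm

theorem isTree_parentGraph (hdepth : ∀ v, v ≠ root → depth (parent v) < depth v) :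
    (parentGraph root parent).IsTree :=
  ⟨connected_parentGraph hdepth, isAcyclic_parentGraph hdepth⟩

theorem isLeafVert_parentGraph_iff (hdepth : ∀ v, v ≠ root → depth (parent v) < depth v)
    {w : V} (hw : w ≠ root) :
    IsLeafVert (parentGraph root parent) w ↔ ∀ c, c ≠ root → parent c ≠ w := by
  constructor
  · rintro hleaf c hc rfl
    refine not_isLeafVert_of_adj (parentGraph_adj_parent hdepth hw)
      (parentGraph_adj_parent hdepth hc).symm
      (fun h => ((hdepth _ hw).trans (hdepth c hc)).ne (congrArg depth h)) hleaf
  · intro hchild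
    refine ⟨parent w, parentGraph_adj_parent hdepth hw, fun u hu => ?_⟩
    rcases (parentGraph_adj.1 hu).2 with ⟨hu0, rfl⟩ | ⟨-, rfl⟩
    · exact absurd rfl (hchild u hu0)
    · rfl

lemma parentGraph_lipschitz (φ : V → ℕ)
    (hφ : ∀ v, v ≠ root → φ v ≤ φ (parent v) + 1 ∧ φ (parent v) ≤ φ v + 1) :
    ∀ u v, (parentGraph root parent).Adj u v → φ v ≤ φ u + 1 := by
  intro u v huv
  rcases (parentGraph_adj.1 huv).2 with ⟨hv, rfl⟩ | ⟨hu, rfl⟩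
  exacts [(hφ v hv).1, (hφ u hu).2]

end parentGraph

end SimpleGraph

namespace Caterpillar

variable {ι : Type} {n : ℕ} {leg : ι → ℕ}

/-- Spine vertices `inl a` for `a ≤ n`; leg vertices `inr ⟨ℓ, j⟩`, at distance `j + 1` from
the spine, so that the leg of `ℓ` has `leg ℓ + 1` edges. -/
abbrev Vert (n : ℕ) (leg : ι → ℕ) : Type := Fin (n + 1) ⊕ Σ ℓ, Fin (leg ℓ + 1)

def root : Vert n leg := .inl 0

def tip (ℓ : ι) : Vert n leg := .inr ⟨ℓ, Fin.last _⟩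

variable (A : ι → Fin (n + 1))

def parent : Vert n leg → Vert n leg
  | .inl a => .inl ⟨a - 1, by omega⟩
  | .inr ⟨ℓ, ⟨0, _⟩⟩ => .inl (A ℓ)
  | .inr ⟨ℓ, ⟨j + 1, _⟩⟩ => .inr ⟨ℓ, ⟨j, by omega⟩⟩

def depth : Vert n leg → ℕ
  | .inl a => a
  | .inr ⟨ℓ, j⟩ => A ℓ + j + 1

def graph (leg : ι → ℕ) : SimpleGraph (Vert n leg) := parentGraph root (parent A)

lemma depth_parent_lt : ∀ v : Vert n leg, v ≠ root → depth A (parent A v) < depth A v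
  | .inl ⟨a, _⟩, hv => by
    have : a ≠ 0 := fun h => hv (by simp [root, h])
    simp only [parent, depth]
    omega
  | .inr ⟨ℓ, ⟨0, _⟩⟩, _ => by simp [parent, depth]
  | .inr ⟨ℓ, ⟨j + 1, _⟩⟩, _ => by simp [parent, depth]

theorem isTree_graph : (graph A leg).IsTree := isTree_parentGraph (depth_parent_lt A)

lemma tip_injective : Function.Injective (tip : ι → Vert n leg) := by
  intro ℓ ℓ' h
  simp only [tip, Sum.inr.injEq, Sigma.mk.injEq] at h
  exact h.1

lemma adj_parent {v : Vert n leg} (hv : v ≠ root) : (graph A leg).Adj v (parent A v) :=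
  parentGraph_adj_parent (depth_parent_lt A) hv

lemma exists_tip_eq_iff_isLeafVert (h0 : ∃ ℓ, A ℓ = 0) (hn : ∃ ℓ, A ℓ = Fin.last n)
    (hpos : 0 < n) (w : Vert n leg) : (∃ ℓ, tip ℓ = w) ↔ IsLeafVert (graph A leg) w := by
  by_cases hw : w = root
  · obtain ⟨ℓ, hℓ⟩ := h0
    have adj_root (v : Vert n leg) (hv : v ≠ root) (h : parent A v = root) :
        (graph A leg).Adj root v := h ▸ (adj_parent A hv).symm
    subst hw
    refine iff_of_false (by simp [tip, root]) (not_isLeafVert_of_adj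
      (adj_root (.inl ⟨1, by omega⟩) (by simp [root]) (by simp [parent, root]))
      (adj_root (.inr ⟨ℓ, ⟨0, by omega⟩⟩) (by simp [root]) (by simp [parent, root, hℓ]))
      (by simp))
  rw [graph, isLeafVert_parentGraph_iff (depth_parent_lt A) hw]
  rcases w with ⟨a, ha⟩ | ⟨ℓ, ⟨j, hj⟩⟩
  · have ha0 : a ≠ 0 := fun h => hw (by simp [root, h])
    refine iff_of_false (by simp [tip]) fun hchild => ?_
    by_cases han : a < n
    · exact hchild (.inl ⟨a + 1, by omega⟩) (by simp [root]) (by simp [parent])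
    · obtain ⟨ℓ, hℓ⟩ := hn
      refine hchild (.inr ⟨ℓ, ⟨0, by omega⟩⟩) (by simp [root]) ?_
      simp only [parent, hℓ, Sum.inl.injEq, Fin.ext_iff, Fin.val_last]
      omega
  · by_cases hjl : j = leg ℓ
    · subst hjl
      refine iff_of_true ⟨ℓ, rfl⟩ ?_
      rintro (c | ⟨ℓ', ⟨_ | j', hj'⟩⟩) - hc <;> simp only [parent, reduceCtorEq] at hc
      obtain ⟨rfl, hc⟩ := Sum.inr_injective hc |> Sigma.mk.inj
      simp only [heq_eq_eq, Fin.mk.injEq] at hc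
      omega
    · refine iff_of_false ?_ fun hchild => ?_
      · rintro ⟨ℓ', h⟩
        obtain ⟨rfl, h⟩ := Sum.inr_injective h |> Sigma.mk.inj
        simp only [heq_eq_eq, Fin.ext_iff, Fin.val_last] at h
        exact hjl h.symm
      · exact hchild (.inr ⟨ℓ, ⟨j + 1, by omega⟩⟩) (by simp [root]) rfl

lemma dist_parent {v : Vert n leg} (hv : v ≠ root) : (graph A leg).dist v (parent A v) = 1 :=
  dist_eq_one_iff_adj.2 (adj_parent A hv)

lemma dist_spine_le (a b : Fin (n + 1)) :
    (graph A leg).dist (.inl a) (.inl b) ≤ Nat.dist a b := by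
  wlog hab : a ≤ b generalizing a b
  · rw [SimpleGraph.dist_comm, Nat.dist_comm]
    exact this b a (le_of_not_ge hab)
  obtain ⟨k, hk⟩ := Nat.exists_eq_add_of_le (Fin.le_def.1 hab)
  rw [Nat.dist_eq_sub_of_le hab, hk, Nat.add_sub_cancel_left]
  induction k generalizing b with
  | zero => simp [Fin.ext hk]
  | succ k ih =>
    have hb : (.inl b : Vert n leg) ≠ root := by
      simp only [root, ne_eq, Sum.inl.injEq, Fin.ext_iff, Fin.val_zero]
      omega
    have hpar : parent A (.inl b : Vert n leg) = .inl ⟨a + k, by omega⟩ := by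
      simp only [parent, hk, Sum.inl.injEq, Fin.mk.injEq]
      omega
    calc (graph A leg).dist (.inl a) (.inl b)
        ≤ (graph A leg).dist (.inl a) (parent A (.inl b)) +
            (graph A leg).dist (parent A (.inl b)) (.inl b) :=
          (isTree_graph A).1.dist_triangle
      _ ≤ k + 1 := by
          rw [SimpleGraph.dist_comm (u := parent A _), dist_parent A hb, hpar]
          have := ih ⟨a + k, by omega⟩ (Fin.le_def.2 (by simp)) rfl
          omega

lemma dist_leg_le (ℓ : ι) (j : Fin (leg ℓ + 1)) :
    (graph A leg).dist (.inr ⟨ℓ, j⟩) (.inl (A ℓ)) ≤ j + 1 := by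
  obtain ⟨j, hj⟩ := j
  induction j with
  | zero => exact (dist_parent A (v := .inr ⟨ℓ, ⟨0, hj⟩⟩) (by simp [root])).le
  | succ j ih =>
    calc (graph A leg).dist (.inr ⟨ℓ, ⟨j + 1, hj⟩⟩) (.inl (A ℓ))
        ≤ (graph A leg).dist (.inr ⟨ℓ, ⟨j + 1, hj⟩⟩) (parent A (.inr ⟨ℓ, ⟨j + 1, hj⟩⟩)) +
            (graph A leg).dist (.inr ⟨ℓ, ⟨j, by omega⟩⟩) (.inl (A ℓ)) :=
          (isTree_graph A).1.dist_triangle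
      _ ≤ j + 1 + 1 := by
          rw [dist_parent A (by simp [root])]
          have := ih (by omega)
          simp only at this
          omega

/-- The distance from `tip ℓ₀`; being `1`-Lipschitz, it bounds the true distance from below. -/
def distTip [DecidableEq ι] (ℓ₀ : ι) : Vert n leg → ℕ
  | .inl a => leg ℓ₀ + 1 + Nat.dist (A ℓ₀) a
  | .inr ⟨ℓ, j⟩ => if ℓ = ℓ₀ then leg ℓ₀ - j else leg ℓ₀ + 1 + Nat.dist (A ℓ₀) (A ℓ) + (j + 1)

lemma distTip_parent [DecidableEq ι] (ℓ₀ : ι) : ∀ v : Vert n leg, v ≠ root →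
    distTip A ℓ₀ v ≤ distTip A ℓ₀ (parent A v) + 1 ∧
      distTip A ℓ₀ (parent A v) ≤ distTip A ℓ₀ v + 1
  | .inl ⟨a, _⟩, hv => by
    have : a ≠ 0 := fun h => hv (by simp [root, h])
    simp only [distTip, parent, Nat.dist]
    omega
  | .inr ⟨ℓ, ⟨0, _⟩⟩, _ => by
    by_cases h : ℓ = ℓ₀
    · subst h; simp only [distTip, parent, if_true, Nat.dist_self]; omega
    · simp only [distTip, parent, if_neg h]; omega
  | .inr ⟨ℓ, ⟨j + 1, _⟩⟩, _ => by
    by_cases h : ℓ = ℓ₀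
    · subst h; simp only [distTip, parent, if_true]; omega
    · simp only [distTip, parent, if_neg h]; omega

theorem dist_tip_tip {ℓ ℓ' : ι} (h : ℓ ≠ ℓ') :
    (graph A leg).dist (tip ℓ) (tip ℓ') = leg ℓ + leg ℓ' + 2 + Nat.dist (A ℓ) (A ℓ') := by
  classical
  apply le_antisymm
  · calc (graph A leg).dist (tip ℓ) (tip ℓ')
        ≤ (graph A leg).dist (tip ℓ) (.inl (A ℓ)) + (graph A leg).dist (.inl (A ℓ)) (.inl (A ℓ')) +
            (graph A leg).dist (.inl (A ℓ')) (tip ℓ') :=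
          (isTree_graph A).1.dist_triangle.trans
            (Nat.add_le_add_right (isTree_graph A).1.dist_triangle _)
      _ ≤ (leg ℓ + 1) + Nat.dist (A ℓ) (A ℓ') + (leg ℓ' + 1) := by
          gcongr
          · exact dist_leg_le A ℓ _
          · exact dist_spine_le A _ _
          · rw [SimpleGraph.dist_comm]; exact dist_leg_le A ℓ' _
      _ = _ := by ring
  · have := le_add_dist_of_lipschitz (distTip A ℓ) (parentGraph_lipschitz _ (distTip_parent A ℓ))
      ((isTree_graph A (leg := leg)).1.preconnected (tip ℓ) (tip ℓ'))
    simp only [distTip, tip, graph, if_neg h.symm, if_true, Fin.val_last, Nat.sub_self] at this ⊢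
    omega

end Caterpillar

lemma mval_eq_of_forall_le {V W : Type} {T : SimpleGraph W} {f : V → W} {v u₀ : V} {m : ℕ}
    (hu₀ : u₀ ≠ v) (hm : T.dist (f u₀) (f v) = m) (hle : ∀ u, u ≠ v → m ≤ T.dist (f u) (f v)) :
    mval T f v = m :=
  IsLeast.csInf_eq ⟨⟨u₀, hu₀, hm⟩, by rintro _ ⟨u, hu, rfl⟩; exact hle u hu⟩

namespace IVert

variable {q : ℕ}

instance : Finite (IVert q) := by
  refine Finite.of_injective (β := Bool ⊕ Fin q ⊕ Fin (q - 1))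
    (fun | t => .inl true | b => .inl false | x j => .inr (.inl j) | y i => .inr (.inr i)) ?_
  rintro (_ | _ | _ | _) (_ | _ | _ | _) h <;> simp_all

def pos : IVert q → Fin (2 * q + 1)
  | t => 0
  | b => Fin.last _
  | x j => ⟨q + j, by omega⟩
  | y i => if (i : ℕ) = q - 2 then Fin.last _ else ⟨q + 1 + i, by omega⟩

def leg : IVert q → ℕ
  | t => 0
  | b => 0
  | x j => q - 1 - j
  | y i => if (i : ℕ) = q - 2 then 2 * q - 3 else q + 1 + i

def tipDist (u v : IVert q) : ℕ := u.leg + v.leg + 2 + Nat.dist u.pos v.pos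

lemma oddGadget_adj_iff {u v : IVert q} (huv : u ≠ v) :
    (oddGadget q).Adj u v ↔ tipDist u v ≤ 2 * q + 1 := by
  rw [oddGadget, fromRel_adj, tipDist]
  rcases u with _ | _ | ⟨j⟩ | ⟨i⟩ <;> rcases v with _ | _ | ⟨j'⟩ | ⟨i'⟩ <;>
    simp only [leg, pos] <;> (try split_ifs) <;> simp [Nat.dist, Fin.ext_iff] at huv ⊢ <;> omega

lemma tipDist_x_t (j : Fin q) : tipDist (x j) t = 2 * q + 1 := by
  simp only [tipDist, leg, pos, Nat.dist, Fin.val_zero]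
  omega

lemma tipDist_t_le {u : IVert q} (hu : u ≠ t) : 2 * q + 1 ≤ tipDist u t := by
  rcases u with _ | _ | ⟨j⟩ | ⟨i⟩ <;> simp only [tipDist, leg, pos] <;> (try split_ifs) <;>
    simp [Nat.dist] at hu ⊢ <;> omega

lemma tipDist_x_last_b (hq : 1 ≤ q) : tipDist (x ⟨q - 1, by omega⟩ : IVert q) b = 3 := by
  simp only [tipDist, leg, pos, Nat.dist, Fin.val_last]
  omega

lemma tipDist_b_le (hq : 2 ≤ q) {u : IVert q} (hu : u ≠ b) : 3 ≤ tipDist u b := by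
  rcases u with _ | _ | ⟨j⟩ | ⟨i⟩ <;> simp only [tipDist, leg, pos] <;> (try split_ifs) <;>
    simp [Nat.dist] at hu ⊢ <;> omega

end IVert

open IVert in
theorem odd_gadget_root_T (q : ℕ) (hq : 2 ≤ q) (k : ℕ) (hk : k = 2 * q + 1) :
    ∃ (W : Type) (T : SimpleGraph W) (f : IVert q → W),
      IsLeafRoot (oddGadget q) k T f ∧
      mval T f IVert.t = k ∧ mval T f IVert.b = 3 := by
  subst hk
  set T := Caterpillar.graph (pos (q := q)) leg
  have hdist (u v : IVert q) (huv : u ≠ v) :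
      T.dist (Caterpillar.tip u) (Caterpillar.tip v) = tipDist u v :=
    Caterpillar.dist_tip_tip _ huv
  have hleaves := Caterpillar.exists_tip_eq_iff_isLeafVert (leg := leg) (pos (q := q))
    ⟨t, rfl⟩ ⟨b, rfl⟩ (by omega)
  refine ⟨_, T, Caterpillar.tip, ⟨inferInstance, Caterpillar.isTree_graph _,
    Caterpillar.tip_injective, hleaves, fun u v huv => ?_⟩, ?_, ?_⟩
  · rw [hdist u v huv, oddGadget_adj_iff huv]
  · refine mval_eq_of_forall_le (u₀ := x ⟨0, by omega⟩) (by simp)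
      (by rw [hdist _ _ (by simp), tipDist_x_t]) fun u hu => ?_
    rw [hdist u _ hu]
    exact tipDist_t_le hu
  · refine mval_eq_of_forall_le (u₀ := x ⟨q - 1, by omega⟩) (by simp)
      (by rw [hdist _ _ (by simp), tipDist_x_last_b (by omega)]) fun u hu => ?_
    rw [hdist u _ hu]
    exact tipDist_b_le hq hu
end

section
/- Fix an even integer k = 2q ≥ 6 and let J_k be the even interior gadget. Then for every k-leaf root T of J_k, if m_T(t) = k then m_T(b) = 3. -/
open SimpleGraph

/-- Vertices of the even interior gadget for `k = 2q`: `t`, `b`, `z1`, `z2`,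
`x i` for `i : Fin q` (representing `x_{i+1}`), and `y i` for `i : Fin (q-1)`
(representing `y_{i+2}`). -/
inductive JVert (q : ℕ) : Type where
  | t : JVert q
  | b : JVert q
  | z1 : JVert q
  | z2 : JVert q
  | x : Fin q → JVert q
  | y : Fin (q - 1) → JVert q

/-- The even interior gadget `J_k` for even `k = 2q ≥ 6`: edges `t x_i` for all
`1 ≤ i ≤ q`; `b x_i`, `z1 x_i`, `z2 x_i` for all `2 ≤ i ≤ q`; `x_i x_j` for `i < j`;
`y_i x_j` for `2 ≤ i ≤ j ≤ q`; `b y_q`; `b z1`; and `b z2`. -/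
def evenGadget (q : ℕ) : SimpleGraph (JVert q) :=
  SimpleGraph.fromRel (fun u v => match u, v with
    | .t, .x _ => True
    | .b, .x i => 1 ≤ (i : ℕ)
    | .z1, .x i => 1 ≤ (i : ℕ)
    | .z2, .x i => 1 ≤ (i : ℕ)
    | .x i, .x j => i ≠ j
    | .y a, .x c => (a : ℕ) + 1 ≤ (c : ℕ)
    | .b, .y a => (a : ℕ) = q - 2
    | .b, .z1 => True
    | .b, .z2 => True
    | _, _ => False)

/-!
Root the leaf root at `t`, write `|u|` for the depth `d(t, u)` of a leaf and `(u | v)` for the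
Gromov product at `t`, i.e. the distance from `t` to the path between `u` and `v`. In a tree
`2 (u | v) + d(u, v) = |u| + |v|` and the Gromov product is an ultrametric, so every edge or
non-edge of `J_k` becomes an inequality between depths and Gromov products. Since `m_T(t) = k`,
all `x_i` have depth exactly `k` and all other leaves depth at least `k`.

The leaf `y_{i+1}` sees `x_{i+1}` and `x_q` but not `x_i`, so `(x_i | x_q)` grows strictly for
`i = 2, …, q - 1` and `|y_q| > 2 (x_{q-1} | x_q)`. The middle `b` of the induced path
`z_1 b z_2` is shallower than `z_1` or `z_2`, which both see `x_2` and `x_q`, so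
`|b| < 2 (x_2 | x_q)`. The path `b y_q x_q` then gives `d(b, x_q) ≤ |b| + k - |y_q| ≤ 4`, and
`d(b, x_q) ≡ |b| + k` (mod 2) excludes `4`. Conversely two leaves at distance `2` are siblings and
hence have the same neighbours in `J_k`, while no other vertex of `J_k` has the neighbours of `b`.
-/

namespace SimpleGraph

variable {W : Type*} {T : SimpleGraph W}

lemma IsTree.length_eq_dist_of_isPath (hT : T.IsTree) {u v : W} {p : T.Walk u v}
    (hp : p.IsPath) : p.length = T.dist u v := by
  obtain ⟨p₀, hp₀, hl₀⟩ := hT.connected.exists_path_of_dist u v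
  rw [(hT.existsUnique_path u v).unique hp hp₀, hl₀]

lemma IsTree.dist_add_dist_of_mem_support [DecidableEq W] (hT : T.IsTree) {u v x : W}
    {p : T.Walk u v} (hp : p.IsPath) (hx : x ∈ p.support) :
    T.dist u x + T.dist x v = T.dist u v := by
  rw [← hT.length_eq_dist_of_isPath (hp.takeUntil hx),
    ← hT.length_eq_dist_of_isPath (hp.dropUntil hx), ← Walk.length_append, p.take_spec hx,
    hT.length_eq_dist_of_isPath hp]

/-- The geodesic from `r` to `m` meets `p` only in `m`, so their concatenation is again a path. -/
lemma IsTree.dist_eq_add_length_of_forall_dist_le (hT : T.IsTree) (r : W) {m u : W}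
    {p : T.Walk m u} (hp : p.IsPath) (hmin : ∀ x ∈ p.support, T.dist r m ≤ T.dist r x) :
    T.dist r u = T.dist r m + p.length := by
  classical
  obtain ⟨s, hs, hsl⟩ := hT.connected.exists_path_of_dist r m
  have hm : m ∉ p.support.tail := by
    have := hp.support_nodup
    rw [← p.cons_tail_support] at this
    exact (List.nodup_cons.mp this).1
  have hsp : (s.append p).IsPath := by
    rw [Walk.isPath_def, Walk.support_append, List.nodup_append]
    refine ⟨hs.support_nodup, hp.support_nodup.sublist (List.tail_sublist _), ?_⟩
    rintro x hxs x' hx' rfl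
    have hxm : 0 < T.dist x m := hT.connected.pos_dist_of_ne (ne_of_mem_of_not_mem hx' hm)
    have := hT.dist_add_dist_of_mem_support hs hxs
    have := hmin x (List.mem_of_mem_tail hx')
    omega
  rw [← hT.length_eq_dist_of_isPath hsp, Walk.length_append, hsl]

lemma IsTree.exists_closest_mem_support (hT : T.IsTree) (r : W) {u v : W} {p : T.Walk u v}
    (hp : p.IsPath) : ∃ m ∈ p.support, (∀ x ∈ p.support, T.dist r m ≤ T.dist r x) ∧
      T.dist r u + T.dist r v = 2 * T.dist r m + T.dist u v := by
  classical
  obtain ⟨m, hm, hmin⟩ := p.support.toFinset.exists_min_image (T.dist r)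
    ⟨u, by simp⟩
  simp only [List.mem_toFinset] at hm hmin
  refine ⟨m, hm, hmin, ?_⟩
  have hu := hT.dist_eq_add_length_of_forall_dist_le r (hp.takeUntil hm).reverse
    fun x hx => hmin x <| p.support_takeUntil_subset_support hm <| by simpa using hx
  have hv := hT.dist_eq_add_length_of_forall_dist_le r (hp.dropUntil hm)
    fun x hx => hmin x <| p.support_dropUntil_subset_support hm hx
  have hlen := congrArg Walk.length (p.take_spec hm)
  rw [Walk.length_append] at hlen
  rw [Walk.length_reverse] at hu
  rw [hu, hv, ← hT.length_eq_dist_of_isPath hp, ← hlen]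
  ring

/-- The Gromov product `(u | v)_r`. In a tree it is the distance from `r` to the path between
`u` and `v`, and the subtraction is exact. -/
noncomputable def gromovProduct (T : SimpleGraph W) (r u v : W) : ℕ :=
  (T.dist r u + T.dist r v - T.dist u v) / 2

lemma gromovProduct_comm (r u v : W) : gromovProduct T r u v = gromovProduct T r v u := by
  rw [gromovProduct, gromovProduct, add_comm, dist_comm (u := u)]

lemma IsTree.exists_mem_support_gromovProduct_eq (hT : T.IsTree) (r : W) {u v : W}
    {p : T.Walk u v} (hp : p.IsPath) : ∃ m ∈ p.support, gromovProduct T r u v = T.dist r m ∧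
      ∀ x ∈ p.support, T.dist r m ≤ T.dist r x := by
  obtain ⟨m, hm, hmin, hsum⟩ := hT.exists_closest_mem_support r hp
  exact ⟨m, hm, by rw [gromovProduct, hsum]; omega, hmin⟩

lemma IsTree.two_mul_gromovProduct_add_dist (hT : T.IsTree) (r u v : W) :
    2 * gromovProduct T r u v + T.dist u v = T.dist r u + T.dist r v := by
  obtain ⟨p, hp, -⟩ := hT.connected.exists_path_of_dist u v
  obtain ⟨m, -, hmin, hsum⟩ := hT.exists_closest_mem_support r hp
  rw [gromovProduct, hsum]
  omega

lemma IsTree.min_gromovProduct_le (hT : T.IsTree) (r u v w : W) :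
    min (gromovProduct T r u v) (gromovProduct T r v w) ≤ gromovProduct T r u w := by
  classical
  obtain ⟨p₁, hp₁, -⟩ := hT.connected.exists_path_of_dist u v
  obtain ⟨p₂, hp₂, -⟩ := hT.connected.exists_path_of_dist v w
  obtain ⟨m, hm, hgp, -⟩ :=
    hT.exists_mem_support_gromovProduct_eq r (p₁.append p₂).bypass_isPath
  obtain ⟨m₁, -, hgp₁, hmin₁⟩ := hT.exists_mem_support_gromovProduct_eq r hp₁
  obtain ⟨m₂, -, hgp₂, hmin₂⟩ := hT.exists_mem_support_gromovProduct_eq r hp₂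
  rw [hgp, hgp₁, hgp₂]
  rcases (Walk.mem_support_append_iff _ _).mp ((p₁.append p₂).support_bypass_subset_support hm)
    with h | h
  · exact min_le_of_left_le (hmin₁ m h)
  · exact min_le_of_right_le (hmin₂ m h)

section Leaf

variable {V : Type} {G : SimpleGraph V}

lemma Connected.dist_eq_dist_add_one_of_isLeafVert (hG : G.Connected)
    {u n w : V} (hu : IsLeafVert G u) (hn : G.Adj u n) (hw : w ≠ u) :
    G.dist u w = G.dist n w + 1 := by
  obtain ⟨p, hl⟩ := hG.exists_walk_length_eq_dist u w
  cases p with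
  | nil => exact absurd rfl hw
  | @cons _ n' _ h q =>
    obtain rfl : n' = n := hu.unique h hn
    have := dist_le q
    have : G.dist u w ≤ G.dist u n' + G.dist n' w := hG.dist_triangle
    have : G.dist u n' = 1 := dist_eq_one_iff_adj.mpr hn
    simp only [Walk.length_cons] at hl
    omega

lemma Connected.dist_eq_of_isLeafVert_of_dist_le_two (hG : G.Connected) {u v w : V}
    (hu : IsLeafVert G u) (hv : IsLeafVert G v) (huv : G.dist u v ≤ 2) (hwu : w ≠ u)
    (hwv : w ≠ v) : G.dist u w = G.dist v w := by
  rcases eq_or_ne u v with rfl | hne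
  · rfl
  obtain ⟨n, hn⟩ := hu.exists
  obtain ⟨n', hn'⟩ := hv.exists
  have hun := hG.dist_eq_dist_add_one_of_isLeafVert hu hn hne.symm
  have huw := hG.dist_eq_dist_add_one_of_isLeafVert hu hn hwu
  have hvw := hG.dist_eq_dist_add_one_of_isLeafVert hv hn' hwv
  rcases Nat.le_one_iff_eq_zero_or_eq_one.mp (show G.dist n v ≤ 1 by omega) with h0 | h1
  · obtain rfl : n = v := hG.dist_eq_zero_iff.mp h0
    obtain rfl : n' = u := hv.unique hn' hn.symm
    omega
  · obtain rfl : n' = n := hv.unique hn' (dist_eq_one_iff_adj.mp h1).symm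
    omega

end Leaf

end SimpleGraph

lemma mval_le_dist {V W : Type} (T : SimpleGraph W) (f : V → W) {u v : V} (huv : u ≠ v) :
    mval T f v ≤ T.dist (f u) (f v) :=
  Nat.sInf_le ⟨u, huv, rfl⟩

lemma mval_eq_of_dist_eq {V W : Type} {T : SimpleGraph W} {f : V → W} {u v : V} {n : ℕ}
    (huv : u ≠ v) (hd : T.dist (f u) (f v) = n)
    (hmin : ∀ w, w ≠ v → n ≤ T.dist (f w) (f v)) : mval T f v = n :=
  le_antisymm (hd ▸ mval_le_dist T f huv) <|
    le_csInf ⟨_, u, huv, rfl⟩ fun _ ⟨w, hw, hd⟩ => hd ▸ hmin w hw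

namespace IsLeafRoot

variable {V W : Type} {G : SimpleGraph V} {k : ℕ} {T : SimpleGraph W} {f : V → W}
  (h : IsLeafRoot G k T f)
include h

lemma isTree : T.IsTree := h.2.1

lemma injective : Function.Injective f := h.2.2.1

lemma isLeafVert (u : V) : IsLeafVert T (f u) := (h.2.2.2.1 (f u)).mp ⟨u, rfl⟩

lemma adj_iff_dist_le {u v : V} (huv : u ≠ v) : G.Adj u v ↔ T.dist (f u) (f v) ≤ k :=
  h.2.2.2.2 u v huv

lemma three_le_dist_of_not_adj_iff {u v w : V} (hwu : w ≠ u) (hwv : w ≠ v)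
    (hsep : ¬(G.Adj u w ↔ G.Adj v w)) : 3 ≤ T.dist (f u) (f v) := by
  by_contra! hlt
  have := h.isTree.connected.dist_eq_of_isLeafVert_of_dist_le_two (h.isLeafVert u)
    (h.isLeafVert v) (by omega) (h.injective.ne hwu) (h.injective.ne hwv)
  rw [h.adj_iff_dist_le hwu.symm, h.adj_iff_dist_le hwv.symm, this] at hsep
  exact hsep Iff.rfl

variable (r : V)

lemma adj_iff_le_two_mul_gromovProduct {u v : V} (huv : u ≠ v) :
    G.Adj u v ↔ T.dist (f r) (f u) + T.dist (f r) (f v) ≤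
      k + 2 * gromovProduct T (f r) (f u) (f v) := by
  have := h.isTree.two_mul_gromovProduct_add_dist (f r) (f u) (f v)
  rw [h.adj_iff_dist_le huv]
  omega

lemma depth_le_two_mul_gromovProduct_of_adj_of_adj {u x x' : V} (hx : G.Adj u x)
    (hx' : G.Adj u x') (hkx : k ≤ T.dist (f r) (f x)) (hkx' : k ≤ T.dist (f r) (f x')) :
    T.dist (f r) (f u) ≤ 2 * gromovProduct T (f r) (f x) (f x') := by
  have h₁ := (h.adj_iff_le_two_mul_gromovProduct r hx.ne).mp hx
  have h₂ := (h.adj_iff_le_two_mul_gromovProduct r hx'.ne).mp hx'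
  have := h.isTree.min_gromovProduct_le (f r) (f x) (f u) (f x')
  rw [gromovProduct_comm (f r) (f x)] at this
  omega

lemma two_mul_gromovProduct_add_lt_of_adj_of_not_adj {u x x' : V} (hx' : G.Adj u x')
    (hx : ¬G.Adj u x) (hux : u ≠ x) (hxx' : T.dist (f r) (f x) ≤ T.dist (f r) (f x')) :
    2 * gromovProduct T (f r) (f x) (f x') + k < T.dist (f r) (f x) + T.dist (f r) (f u) := by
  have h₁ := mt (h.adj_iff_le_two_mul_gromovProduct r hux).mpr hx
  have h₂ := (h.adj_iff_le_two_mul_gromovProduct r hx'.ne).mp hx'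
  have := h.isTree.min_gromovProduct_le (f r) (f x) (f x') (f u)
  have := gromovProduct_comm (T := T) (f r) (f x') (f u)
  have := gromovProduct_comm (T := T) (f r) (f x) (f u)
  omega

lemma depth_lt_max_of_adj_of_adj_of_not_adj {b z z' : V} (hz : G.Adj b z) (hz' : G.Adj b z')
    (hzz' : ¬G.Adj z z') (hne : z ≠ z') :
    T.dist (f r) (f b) < max (T.dist (f r) (f z)) (T.dist (f r) (f z')) := by
  have h₁ := (h.adj_iff_le_two_mul_gromovProduct r hz.ne).mp hz
  have h₂ := (h.adj_iff_le_two_mul_gromovProduct r hz'.ne).mp hz'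
  have h₃ := mt (h.adj_iff_le_two_mul_gromovProduct r hne).mpr hzz'
  have := h.isTree.min_gromovProduct_le (f r) (f z) (f b) (f z')
  rw [gromovProduct_comm (f r) (f z)] at this
  omega

lemma dist_add_depth_le_of_adj_of_adj {b y x : V} (hy : G.Adj b y) (hx : G.Adj y x) :
    T.dist (f b) (f x) + T.dist (f r) (f y) ≤
      max (T.dist (f r) (f b)) (T.dist (f r) (f x)) + k := by
  have h₁ := (h.adj_iff_le_two_mul_gromovProduct r hy.ne).mp hy
  have h₂ := (h.adj_iff_le_two_mul_gromovProduct r hx.ne).mp hx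
  have := h.isTree.two_mul_gromovProduct_add_dist (f r) (f b) (f x)
  have := h.isTree.min_gromovProduct_le (f r) (f b) (f y) (f x)
  omega

end IsLeafRoot

lemma evenGadget_exists_not_adj_iff_b {q : ℕ} {u : JVert q} (hu : u ≠ .b) :
    ∃ w, w ≠ u ∧ w ≠ .b ∧ ¬((evenGadget q).Adj u w ↔ (evenGadget q).Adj .b w) := by
  cases u with
  | t => exact ⟨.z1, by simp, by simp, by simp [evenGadget]⟩
  | b => exact absurd rfl hu
  | z1 => exact ⟨.z2, by simp, by simp, by simp [evenGadget]⟩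
  | z2 => exact ⟨.z1, by simp, by simp, by simp [evenGadget]⟩
  | x i => exact ⟨.t, by simp, by simp, by simp [evenGadget]⟩
  | y a => exact ⟨.z1, by simp, by simp, by simp [evenGadget]⟩

section EvenGadget

variable {q : ℕ} {W : Type} {T : SimpleGraph W} {f : JVert q → W}
  (hroot : IsLeafRoot (evenGadget q) (2 * q) T f)
  (hdepth : ∀ u, u ≠ JVert.t → 2 * q ≤ T.dist (f .t) (f u))
include hroot hdepth

lemma evenGadget_dist_t_x (i : Fin q) : T.dist (f .t) (f (.x i)) = 2 * q :=
  le_antisymm ((hroot.adj_iff_dist_le (by simp)).mp (by simp [evenGadget]))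
    (hdepth _ (by simp))

lemma evenGadget_two_mul_gromovProduct_lt_dist_t_y {c : ℕ} (hc : c + 2 ≤ q) :
    2 * gromovProduct T (f .t) (f (.x ⟨c, by omega⟩)) (f (.x ⟨q - 1, by omega⟩)) <
      T.dist (f .t) (f (.y ⟨c, by omega⟩)) := by
  have := hroot.two_mul_gromovProduct_add_lt_of_adj_of_not_adj .t
    (u := .y ⟨c, by omega⟩) (x := .x ⟨c, by omega⟩) (x' := .x ⟨q - 1, by omega⟩)
    (by simp [evenGadget]; omega) (by simp [evenGadget]) (by simp)
    (by rw [evenGadget_dist_t_x hroot hdepth, evenGadget_dist_t_x hroot hdepth])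
  rw [evenGadget_dist_t_x hroot hdepth] at this
  omega

lemma evenGadget_dist_t_y_le_two_mul_gromovProduct {c : ℕ} (hc : c + 2 ≤ q) :
    T.dist (f .t) (f (.y ⟨c, by omega⟩)) ≤
      2 * gromovProduct T (f .t) (f (.x ⟨c + 1, by omega⟩)) (f (.x ⟨q - 1, by omega⟩)) :=
  hroot.depth_le_two_mul_gromovProduct_of_adj_of_adj .t (by simp [evenGadget])
    (by simp [evenGadget]; omega) (hdepth _ (by simp)) (hdepth _ (by simp))

lemma evenGadget_gromovProduct_add_le {c : ℕ} (hc₁ : 1 ≤ c) (hc : c + 2 ≤ q) :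
    gromovProduct T (f .t) (f (.x ⟨1, by omega⟩)) (f (.x ⟨q - 1, by omega⟩)) + (c - 1) ≤
      gromovProduct T (f .t) (f (.x ⟨c, by omega⟩)) (f (.x ⟨q - 1, by omega⟩)) := by
  induction c, hc₁ using Nat.le_induction with
  | base => simp
  | succ c hc₁ ih =>
    have h₁ := evenGadget_two_mul_gromovProduct_lt_dist_t_y hroot hdepth (c := c) (by omega)
    have h₂ := evenGadget_dist_t_y_le_two_mul_gromovProduct hroot hdepth (c := c) (by omega)
    have := ih (by omega)
    omega

lemma evenGadget_dist_b_x_le_three (hq : 3 ≤ q) :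
    T.dist (f .b) (f (.x ⟨q - 1, by omega⟩)) ≤ 3 := by
  have hchain := evenGadget_gromovProduct_add_le hroot hdepth (c := q - 2) (by omega) (by omega)
  have hy := evenGadget_two_mul_gromovProduct_lt_dist_t_y hroot hdepth (c := q - 2) (by omega)
  have hz (z : JVert q) (h₁ : (evenGadget q).Adj z (.x ⟨1, by omega⟩))
      (h₂ : (evenGadget q).Adj z (.x ⟨q - 1, by omega⟩)) :=
    hroot.depth_le_two_mul_gromovProduct_of_adj_of_adj .t h₁ h₂ (hdepth _ (by simp))
      (hdepth _ (by simp))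
  have hz₁ := hz .z1 (by simp [evenGadget]) (by simp [evenGadget]; omega)
  have hz₂ := hz .z2 (by simp [evenGadget]) (by simp [evenGadget]; omega)
  have hb := hroot.depth_lt_max_of_adj_of_adj_of_not_adj .t (b := .b) (z := .z1) (z' := .z2)
    (by simp [evenGadget]) (by simp [evenGadget]) (by simp [evenGadget]) (by simp)
  have hpath := hroot.dist_add_depth_le_of_adj_of_adj .t (b := .b) (y := .y ⟨q - 2, by omega⟩)
    (x := .x ⟨q - 1, by omega⟩) (by simp [evenGadget]) (by simp [evenGadget]; omega)
  have hparity :=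
    hroot.isTree.two_mul_gromovProduct_add_dist (f .t) (f .b) (f (.x ⟨q - 1, by omega⟩))
  have hx := evenGadget_dist_t_x hroot hdepth ⟨q - 1, by omega⟩
  have := hdepth .b (by simp)
  omega

end EvenGadget

theorem even_gadget_forced (q : ℕ) (hq : 3 ≤ q) (k : ℕ) (hk : k = 2 * q)
    (W : Type) (T : SimpleGraph W) (f : JVert q → W)
    (hroot : IsLeafRoot (evenGadget q) k T f)
    (ht : mval T f JVert.t = k) :
    mval T f JVert.b = 3 := by
  subst hk
  have hdepth : ∀ u, u ≠ JVert.t → 2 * q ≤ T.dist (f .t) (f u) := fun u hu =>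
    dist_comm (G := T) ▸ ht ▸ mval_le_dist T f hu
  have hlower : ∀ u, u ≠ JVert.b → 3 ≤ T.dist (f u) (f .b) := fun u hu =>
    have ⟨_, hwu, hwb, hsep⟩ := evenGadget_exists_not_adj_iff_b hu
    hroot.three_le_dist_of_not_adj_iff hwu hwb hsep
  have hupper := evenGadget_dist_b_x_le_three hroot hdepth hq
  refine mval_eq_of_dist_eq (u := .x ⟨q - 1, by omega⟩) (by simp) ?_ hlower
  exact le_antisymm (dist_comm (G := T) ▸ hupper) (hlower _ (by simp))
end
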